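/- arXiv:1805.09179 — 2 statements merged into one kernel-verified Lean document; each statement's English description precedes it below -/
import Mathlib

section
/- Let Δ be a flag normal (d−1)-pseudomanifold and let σ be a facet of Δ written as a disjoint union σ = σ₁ ∪ σ₂ with σ₁, σ₂ nonempty and σ₁ ∩ σ₂ = ∅. Then V(lk(σ₁,Δ)) and V(lk(σ₂,Δ)) are disjoint with union V(Δ) if and only if Δ = lk(σ₁,Δ) * lk(σ₂,Δ). -/
open Finset

variable {V : Type*} [DecidableEq V]

/-- A simplicial complex on (a subset of) the vertex type `V`: a collection of
finite sets (the faces) that contains the empty set and is closed under inclusion. -/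
def IsComplex (Δ : Finset (Finset V)) : Prop :=
  ∅ ∈ Δ ∧ ∀ σ ∈ Δ, ∀ τ ⊆ σ, τ ∈ Δ

/-- The vertex set `V(Δ)` of a complex. -/
def verts (Δ : Finset (Finset V)) : Finset V := Δ.sup id

/-- The link `lk(σ,Δ) = {τ ∈ Δ : τ ∩ σ = ∅ ∧ τ ∪ σ ∈ Δ}`. -/
def link (Δ : Finset (Finset V)) (σ : Finset V) : Finset (Finset V) :=
  Δ.filter fun τ => τ ∩ σ = ∅ ∧ τ ∪ σ ∈ Δ

/-- The induced subcomplex `Δ[W] = {σ ∈ Δ : σ ⊆ W}`. -/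
def induced (Δ : Finset (Finset V)) (W : Finset V) : Finset (Finset V) :=
  Δ.filter fun σ => σ ⊆ W

/-- `fNum Δ i` is the number `f_i(Δ)` of `i`-dimensional faces of `Δ`,
i.e. of faces of cardinality `i + 1`. -/
def fNum (Δ : Finset (Finset V)) (i : ℕ) : ℕ :=
  (Δ.filter fun σ => σ.card = i + 1).card

/-- `Δ` is flag: every set of vertices all of whose two-element subsets are
faces of `Δ` is itself a face of `Δ`.  (Taking `u = v` below, this in particular
requires each member of `S` to be a vertex of `Δ`.) -/
def IsFlag (Δ : Finset (Finset V)) : Prop :=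
  ∀ S : Finset V, (∀ u ∈ S, ∀ v ∈ S, ({u, v} : Finset V) ∈ Δ) → S ∈ Δ

/-- A facet: an inclusion-maximal face. -/
def IsFacet (Δ : Finset (Finset V)) (σ : Finset V) : Prop :=
  σ ∈ Δ ∧ ∀ τ ∈ Δ, σ ⊆ τ → τ = σ

/-- A `(d-1)`-dimensional pseudomanifold: a pure `(d-1)`-dimensional complex
(all facets have cardinality `d`) in which every `(d-2)`-dimensional face
(cardinality `d-1`) is contained in exactly two facets (= faces of cardinality `d`). -/
def IsPseudomanifold (Δ : Finset (Finset V)) (d : ℕ) : Prop :=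
  IsComplex Δ ∧ (∀ σ, IsFacet Δ σ → σ.card = d) ∧
    ∀ τ ∈ Δ, τ.card = d - 1 → (Δ.filter fun σ => σ.card = d ∧ τ ⊆ σ).card = 2

/-- The 1-skeleton graph of a complex. -/
def skGraph (Δ : Finset (Finset V)) : SimpleGraph V where
  Adj u v := u ≠ v ∧ ({u, v} : Finset V) ∈ Δ
  symm := ⟨fun u v h => ⟨h.1.symm, by rw [Finset.pair_comm]; exact h.2⟩⟩
  loopless := ⟨fun u h => h.1 rfl⟩

/-- The 1-skeleton graph, restricted to the vertex set of `Δ`, is connected. -/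
def ConnOn (Δ : Finset (Finset V)) : Prop :=
  ((skGraph Δ).induce (verts Δ : Set V)).Connected

/-- A normal `(d-1)`-pseudomanifold: the 1-skeleton is connected and the
1-skeleton of the link of each face of dimension at most `d-3`
(cardinality at most `d-2`) is connected. -/
def IsNormalPseudomanifold (Δ : Finset (Finset V)) (d : ℕ) : Prop :=
  IsPseudomanifold Δ d ∧ ConnOn Δ ∧
    ∀ σ ∈ Δ, σ.card + 2 ≤ d → ConnOn (link Δ σ)

/-- A circle (cycle): a connected 1-dimensional pseudomanifold. -/
def IsCircle (Δ : Finset (Finset V)) : Prop :=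
  IsPseudomanifold Δ 2 ∧ ConnOn Δ

/-- The 0-dimensional complex consisting of two disjoint vertices. -/
def IsTwoPoints (P : Finset (Finset V)) : Prop :=
  ∃ a b : V, a ≠ b ∧ P = {∅, {a}, {b}}

/-- The join of two complexes (on disjoint vertex sets): faces `σ ∪ τ`
with `σ ∈ Δ`, `τ ∈ Γ`. -/
def join (Δ Γ : Finset (Finset V)) : Finset (Finset V) :=
  (Δ ×ˢ Γ).image fun p => p.1 ∪ p.2

/-- `Δ` is the suspension of a circle: the join of a circle with two disjoint points. -/
def IsSuspensionOfCircle (Δ : Finset (Finset V)) : Prop :=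
  ∃ C P, IsCircle C ∧ IsTwoPoints P ∧ Disjoint (verts C) (verts P) ∧ Δ = join C P

/-- Iterated join of a family of complexes. -/
def joinFam : (m : ℕ) → (Fin m → Finset (Finset V)) → Finset (Finset V)
  | 0, _ => {∅}
  | m + 1, C => join (C 0) (joinFam m fun i => C i.succ)

/-- `Δ` is the join of `m` circles (on pairwise disjoint vertex sets). -/
def IsJoinOfCircles (Δ : Finset (Finset V)) (m : ℕ) : Prop :=
  ∃ C : Fin m → Finset (Finset V), (∀ i, IsCircle (C i)) ∧
    (∀ i j, i ≠ j → Disjoint (verts (C i)) (verts (C j))) ∧ Δ = joinFam m C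

/-- `a_k = Σ_{τ ⊆ σ, |τ| = k} f₀(lk(τ,Δ))`. -/
def aNum (Δ : Finset (Finset V)) (σ : Finset V) (k : ℕ) : ℕ :=
  ∑ τ ∈ σ.powersetCard k, fNum (link Δ τ) 0

/-- `W_τ`: the vertices `w` of `lk(τ,Δ)` with `{w,u} ∉ Δ` for every `u ∈ σ \ τ`. -/
def Wset (Δ : Finset (Finset V)) (σ τ : Finset V) : Finset V :=
  (verts (link Δ τ)).filter fun w => ∀ u ∈ σ \ τ, ({w, u} : Finset V) ∉ Δ

/-- `b_k = Σ_{τ ⊆ σ, |τ| = k} |W_τ|`. -/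
def bNum (Δ : Finset (Finset V)) (σ : Finset V) (k : ℕ) : ℕ :=
  ∑ τ ∈ σ.powersetCard k, (Wset Δ σ τ).card

/-- The Euler characteristic `χ(Δ) = Σ_{i ≥ 0} (-1)^i f_i(Δ)`, computed as a sum
of `(-1)^{|σ|-1}` over the nonempty faces `σ`. -/
def eulerChar (Δ : Finset (Finset V)) : ℤ :=
  ∑ σ ∈ Δ.filter (fun σ => σ ≠ ∅), (-1 : ℤ) ^ (σ.card - 1)

/-- `Δ` is Eulerian: for every face `σ` (including `σ = ∅`, whose link is `Δ`),
`χ(lk(σ,Δ)) = 1 + (-1)^{dim lk(σ,Δ)}`; since `dim lk(σ,Δ)` is one less than the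
maximal cardinality of a face of the link, this equals `1 - (-1)^{max card}`. -/
def IsEulerian (Δ : Finset (Finset V)) : Prop :=
  ∀ σ ∈ Δ, eulerChar (link Δ σ) = 1 - (-1) ^ ((link Δ σ).sup Finset.card)

/-!
If the vertex sets of `lk(σ₁)` and `lk(σ₂)` partition `V(Δ)`, flagness splits every face `H`
as `(H ∩ V(lk σ₁)) ∪ (H ∩ V(lk σ₂))` with the two parts in the two links, so `Δ ⊆ lk σ₁ * lk σ₂`.
For the converse inclusion fix a facet `A ∪ B` of `Δ` with `A ∈ lk σ₁`, `B ∈ lk σ₂`. If `B, C` are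
adjacent facets of `lk σ₂`, the ridge `A ∪ (B ∩ C)` of `Δ` lies in exactly two facets; one is
`A ∪ B`, and counting vertices on both sides forces the other to be `A ∪ C`. Since `lk σ₂` is a
normal pseudomanifold, its facets are connected through ridges (by induction on the dimension:
facets through a common vertex are connected inside its link, and the 1-skeleton is connected),
so `A ∪ C ∈ Δ` for all its facets `C`. Disjointness of the two vertex sets is automatic: a common vertex would extend the
facet `σ₁ ∪ σ₂` to a clique, hence to a face.
-/

open Finset Relation

variable {Δ K₁ K₂ : Finset (Finset V)} {σ σ₁ σ₂ τ α β A B C F G : Finset V} {d n p q : ℕ}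

lemma mem_verts {v : V} : v ∈ verts Δ ↔ ∃ τ ∈ Δ, v ∈ τ := by
  simp [verts, mem_sup]

lemma subset_verts (hτ : τ ∈ Δ) : τ ⊆ verts Δ :=
  le_sup (f := id) hτ

lemma mem_link : τ ∈ link Δ σ ↔ τ ∈ Δ ∧ τ ∩ σ = ∅ ∧ τ ∪ σ ∈ Δ := by
  simp [link]

lemma disjoint_of_mem_link (hτ : τ ∈ link Δ σ) : Disjoint τ σ :=
  disjoint_iff_inter_eq_empty.2 (mem_link.1 hτ).2.1

lemma link_subset : link Δ σ ⊆ Δ :=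
  filter_subset _ _

lemma link_empty : link Δ ∅ = Δ := by
  ext τ
  simp +contextual [mem_link]

omit [DecidableEq V] in
lemma IsComplex.mem_of_subset (hC : IsComplex Δ) (hσ : σ ∈ Δ) (hτ : τ ⊆ σ) : τ ∈ Δ :=
  hC.2 σ hσ τ hτ

lemma IsComplex.sdiff_mem_link (hC : IsComplex Δ) (hF : F ∈ Δ) (hσ : σ ⊆ F) :
    F \ σ ∈ link Δ σ :=
  mem_link.2 ⟨hC.mem_of_subset hF sdiff_subset, sdiff_inter_self _ _,
    by rwa [sdiff_union_of_subset hσ]⟩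

lemma isComplex_link (hC : IsComplex Δ) (hσ : σ ∈ Δ) : IsComplex (link Δ σ) := by
  refine ⟨mem_link.2 ⟨hC.1, empty_inter _, by rwa [empty_union]⟩, fun τ hτ τ' hτ' => ?_⟩
  obtain ⟨hτΔ, -, hτσ⟩ := mem_link.1 hτ
  exact mem_link.2 ⟨hC.mem_of_subset hτΔ hτ',
    disjoint_iff_inter_eq_empty.1 ((disjoint_of_mem_link hτ).mono_left hτ'),
    hC.mem_of_subset hτσ (union_subset_union_left hτ')⟩

lemma IsComplex.mem_verts_link (hC : IsComplex Δ) {v : V} :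
    v ∈ verts (link Δ σ) ↔ v ∉ σ ∧ insert v σ ∈ Δ := by
  constructor
  · rw [mem_verts]
    rintro ⟨τ, hτ, hvτ⟩
    refine ⟨disjoint_left.1 (disjoint_of_mem_link hτ) hvτ, hC.mem_of_subset (mem_link.1 hτ).2.2 ?_⟩
    exact insert_subset (mem_union_left _ hvτ) subset_union_right
  · rintro ⟨hvσ, hv⟩
    refine subset_verts (mem_link.2 ⟨hC.mem_of_subset hv ?_, ?_, ?_⟩) (mem_singleton_self v)
    · exact singleton_subset_iff.2 (mem_insert_self v σ)
    · exact singleton_inter_of_notMem hvσ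
    · rwa [← insert_eq]

lemma link_link (hC : IsComplex Δ) (hτσ : τ ∩ σ = ∅) :
    link (link Δ σ) τ = link Δ (σ ∪ τ) := by
  ext γ
  simp only [mem_link, inter_union_distrib_left, union_eq_empty]
  have e : γ ∪ τ ∪ σ = γ ∪ (σ ∪ τ) := by rw [union_assoc, union_comm τ]
  constructor
  · rintro ⟨⟨hγ, hγσ, -⟩, hγτ, -, -, hγτσ⟩
    exact ⟨hγ, ⟨hγσ, hγτ⟩, e ▸ hγτσ⟩
  · rintro ⟨hγ, ⟨hγσ, hγτ⟩, hγστ⟩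
    refine ⟨⟨hγ, hγσ, hC.mem_of_subset hγστ (union_subset_union_right subset_union_left)⟩, hγτ,
      hC.mem_of_subset hγστ (union_subset_union_right subset_union_right), ?_, e ▸ hγστ⟩
    rw [union_inter_distrib_right, hγσ, hτσ, union_empty]

omit [DecidableEq V] in
lemma exists_isFacet_superset (hτ : τ ∈ Δ) : ∃ F, IsFacet Δ F ∧ τ ⊆ F := by
  obtain ⟨F, hτF, hF, hmax⟩ := Δ.exists_le_maximal hτ
  exact ⟨F, ⟨hF, fun τ' hτ' hFτ' => subset_antisymm (hmax hτ' hFτ') hFτ'⟩, hτF⟩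

lemma IsFacet.union_of_link (hC : IsComplex Δ) (hβ : IsFacet (link Δ σ) β) :
    IsFacet Δ (β ∪ σ) := by
  refine ⟨(mem_link.1 hβ.1).2.2, fun τ hτ hβτ => ?_⟩
  have hστ : σ ⊆ τ := subset_union_right.trans hβτ
  have hβ' : β ⊆ τ \ σ :=
    subset_sdiff.2 ⟨subset_union_left.trans hβτ, disjoint_of_mem_link hβ.1⟩
  rw [← hβ.2 _ (hC.sdiff_mem_link hτ hστ) hβ', sdiff_union_of_subset hστ]

lemma eq_or_eq_of_card_eq_two {ι : Type*} [DecidableEq ι] {s : Finset ι} {a b x : ι}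
    (hs : s.card = 2) (ha : a ∈ s) (hb : b ∈ s) (hab : a ≠ b) (hx : x ∈ s) : x = a ∨ x = b := by
  have : s = {a, b} :=
    (eq_of_subset_of_card_le (insert_subset ha (singleton_subset_iff.2 hb))
      (by rw [hs, card_pair hab])).symm
  simpa [this] using hx

lemma IsPseudomanifold.card_le (h : IsPseudomanifold Δ d) (hτ : τ ∈ Δ) : τ.card ≤ d := by
  obtain ⟨F, hF, hτF⟩ := exists_isFacet_superset hτ
  exact h.2.1 F hF ▸ card_le_card hτF

lemma IsPseudomanifold.isFacet_of_card (h : IsPseudomanifold Δ d) (hτ : τ ∈ Δ)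
    (hτd : τ.card = d) : IsFacet Δ τ :=
  ⟨hτ, fun _ hτ' hττ' => (eq_of_subset_of_card_le hττ' (hτd ▸ h.card_le hτ')).symm⟩

theorem isPseudomanifold_link (h : IsPseudomanifold Δ d) (hσ : σ ∈ Δ) (hlt : σ.card < d) :
    IsPseudomanifold (link Δ σ) (d - σ.card) := by
  refine ⟨isComplex_link h.1 hσ, fun β hβ => ?_, fun ρ hρ hρc => ?_⟩
  · have := h.2.1 _ (hβ.union_of_link h.1)
    rw [card_union_of_disjoint (disjoint_of_mem_link hβ.1)] at this
    omega
  obtain ⟨-, -, hρσ⟩ := mem_link.1 hρ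
  have hdisj := disjoint_of_mem_link hρ
  rw [← h.2.2 _ hρσ (by rw [card_union_of_disjoint hdisj]; omega)]
  refine card_nbij' (· ∪ σ) (· \ σ) (fun β hβ => ?_) (fun F hF => ?_)
    (fun β hβ => ?_) (fun F hF => ?_)
  · simp only [coe_filter, Set.mem_ofPred_eq] at hβ ⊢
    obtain ⟨hβl, hβc, hρβ⟩ := hβ
    refine ⟨(mem_link.1 hβl).2.2, ?_, union_subset_union_left hρβ⟩
    rw [card_union_of_disjoint (disjoint_of_mem_link hβl)]
    omega
  · simp only [coe_filter, Set.mem_ofPred_eq] at hF ⊢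
    obtain ⟨hFΔ, hFc, hρF⟩ := hF
    have hσF : σ ⊆ F := subset_union_right.trans hρF
    refine ⟨h.1.sdiff_mem_link hFΔ hσF, by rw [card_sdiff_of_subset hσF, hFc], ?_⟩
    exact subset_sdiff.2 ⟨subset_union_left.trans hρF, hdisj⟩
  · simp only [coe_filter, Set.mem_ofPred_eq] at hβ
    exact union_sdiff_cancel_right (disjoint_of_mem_link hβ.1)
  · simp only [coe_filter, Set.mem_ofPred_eq] at hF
    exact sdiff_union_of_subset (subset_union_right.trans hF.2.2)

lemma mem_join {γ : Finset V} : γ ∈ join K₁ K₂ ↔ ∃ α ∈ K₁, ∃ β ∈ K₂, α ∪ β = γ := by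
  simp [join, and_assoc]

lemma join_comm : join K₁ K₂ = join K₂ K₁ := by
  ext γ
  simp only [mem_join]
  constructor <;> rintro ⟨α, hα, β, hβ, rfl⟩ <;> exact ⟨β, hβ, α, hα, union_comm _ _⟩

lemma verts_join (h₁ : ∅ ∈ K₁) (h₂ : ∅ ∈ K₂) : verts (join K₁ K₂) = verts K₁ ∪ verts K₂ := by
  ext v
  simp only [mem_union, mem_verts, mem_join]
  constructor
  · rintro ⟨_, ⟨α, hα, β, hβ, rfl⟩, hv⟩
    exact (mem_union.1 hv).imp (fun hv => ⟨α, hα, hv⟩) fun hv => ⟨β, hβ, hv⟩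
  · rintro (⟨α, hα, hv⟩ | ⟨β, hβ, hv⟩)
    · exact ⟨α, ⟨α, hα, ∅, h₂, union_empty α⟩, hv⟩
    · exact ⟨β, ⟨∅, h₁, β, hβ, empty_union β⟩, hv⟩

lemma inter_verts_union_inter_verts (hsub : Δ ⊆ join K₁ K₂) (hG : G ∈ Δ) :
    G ∩ verts K₁ ∪ G ∩ verts K₂ = G := by
  obtain ⟨α, hα, β, hβ, rfl⟩ := mem_join.1 (hsub hG)
  rw [← inter_union_distrib_left, inter_eq_left]
  exact union_subset_union (subset_verts hα) (subset_verts hβ)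

lemma inter_verts_left_mem (hsub : Δ ⊆ join K₁ K₂) (hdisj : Disjoint (verts K₁) (verts K₂))
    (hG : G ∈ Δ) : G ∩ verts K₁ ∈ K₁ := by
  obtain ⟨α, hα, β, hβ, rfl⟩ := mem_join.1 (hsub hG)
  rwa [union_inter_distrib_right, inter_eq_left.2 (subset_verts hα),
    disjoint_iff_inter_eq_empty.1 (hdisj.symm.mono_left (subset_verts hβ)), union_empty]

lemma inter_verts_right_mem (hsub : Δ ⊆ join K₁ K₂) (hdisj : Disjoint (verts K₁) (verts K₂))
    (hG : G ∈ Δ) : G ∩ verts K₂ ∈ K₂ :=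
  inter_verts_left_mem (join_comm (K₁ := K₁) ▸ hsub) hdisj.symm hG

lemma card_inter_verts_of_card_eq (hsub : Δ ⊆ join K₁ K₂)
    (hdisj : Disjoint (verts K₁) (verts K₂)) (hK₁ : ∀ α ∈ K₁, α.card ≤ p)
    (hK₂ : ∀ β ∈ K₂, β.card ≤ q) (hG : G ∈ Δ) (hGc : G.card = p + q) :
    (G ∩ verts K₁).card = p ∧ (G ∩ verts K₂).card = q := by
  have hsplit : (G ∩ verts K₁).card + (G ∩ verts K₂).card = p + q := by
    rw [← hGc, ← card_union_of_disjoint (hdisj.mono inter_subset_right inter_subset_right),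
      inter_verts_union_inter_verts hsub hG]
  have := hK₁ _ (inter_verts_left_mem hsub hdisj hG)
  have := hK₂ _ (inter_verts_right_mem hsub hdisj hG)
  omega

lemma IsFlag.union_mem (hF : IsFlag Δ) (hC : IsComplex Δ) (hα : α ∈ Δ) (hβ : β ∈ Δ)
    (h : ∀ a ∈ α, ∀ b ∈ β, ({a, b} : Finset V) ∈ Δ) : α ∪ β ∈ Δ := by
  have pair_mem {s : Finset V} (hs : s ∈ Δ) {a b : V} (ha : a ∈ s) (hb : b ∈ s) :
      ({a, b} : Finset V) ∈ Δ :=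
    hC.mem_of_subset hs (insert_subset ha (singleton_subset_iff.2 hb))
  refine hF _ fun u hu w hw => ?_
  rcases mem_union.1 hu with hu | hu <;> rcases mem_union.1 hw with hw | hw
  · exact pair_mem hα hu hw
  · exact h u hu w hw
  · exact pair_comm u w ▸ h w hw u hu
  · exact pair_mem hβ hu hw

lemma IsFlag.mem_link_of_subset_verts (hF : IsFlag Δ) (hC : IsComplex Δ) (hσ : σ ∈ Δ)
    (hτΔ : τ ∈ Δ) (hτ : τ ⊆ verts (link Δ σ)) : τ ∈ link Δ σ := by
  have hvert {v : V} (hv : v ∈ τ) := hC.mem_verts_link.1 (hτ hv)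
  refine mem_link.2 ⟨hτΔ, disjoint_iff_inter_eq_empty.1 (disjoint_left.2 fun v hv => (hvert hv).1),
    hF.union_mem hC hτΔ hσ fun a ha b hb => hC.mem_of_subset (hvert ha).2 ?_⟩
  exact insert_subset (mem_insert_self a σ) (singleton_subset_iff.2 (mem_insert_of_mem hb))

lemma IsFlag.disjoint_verts_link (hF : IsFlag Δ) (hC : IsComplex Δ) (hσ : IsFacet Δ (σ₁ ∪ σ₂)) :
    Disjoint (verts (link Δ σ₁)) (verts (link Δ σ₂)) := by
  refine disjoint_left.2 fun v hv₁ hv₂ => ?_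
  obtain ⟨hvσ₁, hv₁⟩ := hC.mem_verts_link.1 hv₁
  obtain ⟨hvσ₂, hv₂⟩ := hC.mem_verts_link.1 hv₂
  have hpair {σ' : Finset V} (hv : insert v σ' ∈ Δ) {u : V} (hu : u ∈ σ') :
      ({v, u} : Finset V) ∈ Δ :=
    hC.mem_of_subset hv (insert_subset_insert v (singleton_subset_iff.2 hu))
  have hvσ : {v} ∪ (σ₁ ∪ σ₂) ∈ Δ := by
    refine hF.union_mem hC (hC.mem_of_subset hv₁ (singleton_subset_iff.2 (mem_insert_self v σ₁)))
      hσ.1 fun a ha u hu => ?_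
    rw [mem_singleton.1 ha]
    exact (mem_union.1 hu).elim (hpair hv₁) (hpair hv₂)
  have hvmem : v ∈ σ₁ ∪ σ₂ :=
    hσ.2 _ hvσ subset_union_right ▸ mem_union_left _ (mem_singleton_self v)
  exact (mem_union.1 hvmem).elim hvσ₁ hvσ₂

lemma IsFlag.subset_join_link (hF : IsFlag Δ) (hC : IsComplex Δ) (hσ₁ : σ₁ ∈ Δ) (hσ₂ : σ₂ ∈ Δ)
    (hV : verts (link Δ σ₁) ∪ verts (link Δ σ₂) = verts Δ) :
    Δ ⊆ join (link Δ σ₁) (link Δ σ₂) := by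
  intro H hH
  have hpart {σ : Finset V} (hσ : σ ∈ Δ) : H ∩ verts (link Δ σ) ∈ link Δ σ :=
    hF.mem_link_of_subset_verts hC hσ (hC.mem_of_subset hH inter_subset_left) inter_subset_right
  refine mem_join.2 ⟨_, hpart hσ₁, _, hpart hσ₂, ?_⟩
  rw [← inter_union_distrib_left, hV, inter_eq_left.2 (subset_verts hH)]

/-- A step in the facet–ridge graph of a complex whose facets have `n` vertices. -/
def FacetStep (Δ : Finset (Finset V)) (n : ℕ) (F G : Finset V) : Prop :=
  G ∈ Δ ∧ G.card = n ∧ n ≤ (F ∩ G).card + 1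

def LinksConnOn (Δ : Finset (Finset V)) (n : ℕ) : Prop :=
  ∀ τ ∈ Δ, τ.card + 2 ≤ n → ConnOn (link Δ τ)

lemma LinksConnOn.link (hC : IsComplex Δ) (h : LinksConnOn Δ n) :
    LinksConnOn (link Δ σ) (n - σ.card) := by
  intro τ hτ hτn
  obtain ⟨-, hτσ, hτσΔ⟩ := mem_link.1 hτ
  rw [link_link hC hτσ]
  refine h _ (union_comm τ σ ▸ hτσΔ) ?_
  rw [card_union_of_disjoint (disjoint_of_mem_link hτ).symm]
  omega

lemma FacetStep.union_of_link {b c : Finset V} (h : FacetStep (link Δ σ) n b c) :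
    FacetStep Δ (n + σ.card) (b ∪ σ) (c ∪ σ) := by
  obtain ⟨hc, hcn, hbc⟩ := h
  have hcσ := disjoint_of_mem_link hc
  refine ⟨(mem_link.1 hc).2.2, by rw [card_union_of_disjoint hcσ, hcn], ?_⟩
  rw [← inter_union_distrib_right,
    card_union_of_disjoint (hcσ.mono_left inter_subset_right)]
  omega

lemma reflTransGen_facetStep_of_link (hσF : σ ⊆ F) (hσG : σ ⊆ G)
    (h : ReflTransGen (FacetStep (link Δ σ) n) (F \ σ) (G \ σ)) :
    ReflTransGen (FacetStep Δ (n + σ.card)) F G := by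
  simpa only [Function.onFun, sdiff_union_of_subset hσF, sdiff_union_of_subset hσG] using
    h.lift (· ∪ σ) fun _ _ => FacetStep.union_of_link

lemma reflTransGen_of_connOn {r : Finset V → Finset V → Prop} (hconn : ConnOn Δ)
    (hr : ∀ v F G, IsFacet Δ F → IsFacet Δ G → v ∈ F → v ∈ G → ReflTransGen r F G)
    (hF : IsFacet Δ F) (hG : IsFacet Δ G) {u w : V} (hu : u ∈ F) (hw : w ∈ G) :
    ReflTransGen r F G := by
  let u' : (verts Δ : Set V) := ⟨u, subset_verts hF.1 hu⟩
  have hreach := (SimpleGraph.reachable_iff_reflTransGen _ _).1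
    (hconn.preconnected u' ⟨w, subset_verts hG.1 hw⟩)
  suffices ∀ x, ReflTransGen ((skGraph Δ).induce (verts Δ : Set V)).Adj u' x →
      ∀ H, IsFacet Δ H → ↑x ∈ H → ReflTransGen r F H from this _ hreach G hG hw
  intro x hx
  induction hx with
  | refl => exact fun H hH huH => hr u F H hF hH hu huH
  | tail _ hadj ih =>
    intro H hH hzH
    obtain ⟨H₀, hH₀, hxz⟩ := exists_isFacet_superset (SimpleGraph.induce_adj.1 hadj).2
    exact (ih H₀ hH₀ (hxz (mem_insert_self _ _))).trans
      (hr _ H₀ H hH₀ hH (hxz (mem_insert_of_mem (mem_singleton_self _))) hzH)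

theorem IsPseudomanifold.reflTransGen_facetStep (h : IsPseudomanifold Δ n)
    (hl : LinksConnOn Δ n) (hF : IsFacet Δ F) (hG : IsFacet Δ G) :
    ReflTransGen (FacetStep Δ n) F G := by
  induction n generalizing Δ F G with
  | zero => exact .single ⟨hG.1, h.2.1 G hG, by omega⟩
  | succ n ih =>
    obtain rfl | hn := Nat.eq_zero_or_pos n
    · exact .single ⟨hG.1, h.2.1 G hG, by omega⟩
    have hC := h.1
    have hvertex (v : V) (F G : Finset V) (hF : IsFacet Δ F) (hG : IsFacet Δ G) (hvF : v ∈ F)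
        (hvG : v ∈ G) : ReflTransGen (FacetStep Δ (n + 1)) F G := by
      have hv : {v} ∈ Δ := hC.mem_of_subset hF.1 (singleton_subset_iff.2 hvF)
      have hlk : IsPseudomanifold (link Δ {v}) n := by
        simpa using isPseudomanifold_link h hv (by rw [card_singleton]; omega)
      have hfacet (H : Finset V) (hH : IsFacet Δ H) (hvH : v ∈ H) :
          IsFacet (link Δ {v}) (H \ {v}) :=
        hlk.isFacet_of_card (hC.sdiff_mem_link hH.1 (singleton_subset_iff.2 hvH))
          (by rw [card_sdiff_of_subset (singleton_subset_iff.2 hvH), h.2.1 H hH]; rfl)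
      have := reflTransGen_facetStep_of_link (singleton_subset_iff.2 hvF)
        (singleton_subset_iff.2 hvG) (ih hlk (by simpa using hl.link hC (σ := {v}))
          (hfacet F hF hvF) (hfacet G hG hvG))
      rwa [card_singleton] at this
    obtain ⟨u, hu⟩ := card_pos.1 (by rw [h.2.1 F hF]; omega)
    obtain ⟨w, hw⟩ := card_pos.1 (by rw [h.2.1 G hG]; omega)
    have hconn : ConnOn Δ := link_empty (Δ := Δ) ▸ hl ∅ hC.1 (by rw [card_empty]; omega)
    exact reflTransGen_of_connOn hconn hvertex hF hG hu hw

lemma union_mem_of_facetStep (hΔ : IsPseudomanifold Δ (p + q)) (hK₂ : IsPseudomanifold K₂ q)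
    (hK₁ : ∀ α ∈ K₁, α.card ≤ p) (hsub : Δ ⊆ join K₁ K₂)
    (hdisj : Disjoint (verts K₁) (verts K₂)) (hA : A ⊆ verts K₁) (hAp : A.card = p)
    (hB : B ∈ K₂) (hBq : B.card = q) (hAB : A ∪ B ∈ Δ) (hBC : FacetStep K₂ q B C) :
    A ∪ C ∈ Δ := by
  obtain ⟨hCK, hCq, hBCq⟩ := hBC
  obtain rfl | hne := eq_or_ne B C
  · exact hAB
  have hρq : (B ∩ C).card + 1 = q := by
    have : B ∩ C ⊂ B := inter_subset_left.ssubset_of_ne fun h =>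
      hne (eq_of_subset_of_card_le (h ▸ inter_subset_right) (by omega))
    have := card_lt_card this
    omega
  have hR : A ∪ B ∩ C ∈ Δ := hΔ.1.mem_of_subset hAB (union_subset_union_right inter_subset_left)
  have hRc : (A ∪ B ∩ C).card = p + q - 1 := by
    rw [card_union_of_disjoint (hdisj.mono hA (inter_subset_left.trans (subset_verts hB)))]
    omega
  obtain ⟨G, hGmem, hGne⟩ := exists_mem_ne (by rw [hΔ.2.2 _ hR hRc]; norm_num) (A ∪ B)
  obtain ⟨hG, hGc, hRG⟩ := mem_filter.1 hGmem
  obtain ⟨hG₁, hG₂⟩ :=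
    card_inter_verts_of_card_eq hsub hdisj hK₁ (fun _ => hK₂.card_le) hG hGc
  have hGA : G ∩ verts K₁ = A :=
    (eq_of_subset_of_card_le (subset_inter (subset_union_left.trans hRG) hA) (by omega)).symm
  have hGC : G ∩ verts K₂ = C := by
    have hρ : B ∩ C ∈ K₂ := hK₂.1.mem_of_subset hB inter_subset_left
    have hmem {E : Finset V} (hE : E ∈ K₂) (hEq : E.card = q) (hρE : B ∩ C ⊆ E) :
        E ∈ K₂.filter fun E => E.card = q ∧ B ∩ C ⊆ E :=
      mem_filter.2 ⟨hE, hEq, hρE⟩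
    refine (eq_or_eq_of_card_eq_two (hK₂.2.2 _ hρ (by omega)) (hmem hB hBq inter_subset_left)
      (hmem hCK hCq inter_subset_right) hne (hmem (inter_verts_right_mem hsub hdisj hG) hG₂
        (subset_inter (subset_union_right.trans hRG) (subset_verts hρ)))).resolve_left ?_
    intro hGB
    exact hGne (by rw [← inter_verts_union_inter_verts hsub hG, hGA, hGB])
  rw [← hGA, ← hGC, inter_verts_union_inter_verts hsub hG]
  exact hG

lemma union_mem_of_reflTransGen (hΔ : IsPseudomanifold Δ (p + q))
    (hK₂ : IsPseudomanifold K₂ q) (hK₁ : ∀ α ∈ K₁, α.card ≤ p) (hsub : Δ ⊆ join K₁ K₂)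
    (hdisj : Disjoint (verts K₁) (verts K₂)) (hA : A ⊆ verts K₁) (hAp : A.card = p)
    (hB : B ∈ K₂) (hBq : B.card = q) (hAB : A ∪ B ∈ Δ)
    (hBC : ReflTransGen (FacetStep K₂ q) B C) : A ∪ C ∈ Δ := by
  suffices A ∪ C ∈ Δ ∧ C ∈ K₂ ∧ C.card = q from this.1
  induction hBC with
  | refl => exact ⟨hAB, hB, hBq⟩
  | tail _ hstep ih =>
    exact ⟨union_mem_of_facetStep hΔ hK₂ hK₁ hsub hdisj hA hAp ih.2.1 ih.2.2 ih.1 hstep,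
      hstep.1, hstep.2.1⟩

theorem eq_join_of_subset_join (hΔ : IsPseudomanifold Δ (p + q)) (hK₁ : ∀ α ∈ K₁, α.card ≤ p)
    (hK₂ : IsPseudomanifold K₂ q)
    (hK₂conn : ∀ B C, IsFacet K₂ B → IsFacet K₂ C → ReflTransGen (FacetStep K₂ q) B C)
    (hK₁Δ : K₁ ⊆ Δ) (hK₂Δ : K₂ ⊆ Δ) (hdisj : Disjoint (verts K₁) (verts K₂))
    (hsub : Δ ⊆ join K₁ K₂) : Δ = join K₁ K₂ := by
  refine hsub.antisymm fun γ hγ => ?_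
  obtain ⟨α, hα, β, hβ, rfl⟩ := mem_join.1 hγ
  obtain ⟨F, hF, hαF⟩ := exists_isFacet_superset (hK₁Δ hα)
  obtain ⟨G, hG, hβG⟩ := exists_isFacet_superset (hK₂Δ hβ)
  have hcard {H : Finset V} (hH : IsFacet Δ H) :=
    card_inter_verts_of_card_eq hsub hdisj hK₁ (fun _ => hK₂.card_le) hH.1 (hΔ.2.1 H hH)
  have hpart {H : Finset V} (hH : IsFacet Δ H) : IsFacet K₂ (H ∩ verts K₂) :=
    hK₂.isFacet_of_card (inter_verts_right_mem hsub hdisj hH.1) (hcard hH).2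
  have hAB : F ∩ verts K₁ ∪ G ∩ verts K₂ ∈ Δ := by
    refine union_mem_of_reflTransGen hΔ hK₂ hK₁ hsub hdisj inter_subset_right (hcard hF).1
      (hpart hF).1 (hcard hF).2 ?_ (hK₂conn _ _ (hpart hF) (hpart hG))
    rw [inter_verts_union_inter_verts hsub hF.1]
    exact hF.1
  exact hΔ.1.mem_of_subset hAB (union_subset_union (subset_inter hαF (subset_verts hα))
    (subset_inter hβG (subset_verts hβ)))

/-- Let `Δ` be a flag normal `(d-1)`-pseudomanifold and
`σ = σ₁ ∪ σ₂` a facet with `σ₁, σ₂` nonempty and disjoint.  Then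
`V(lk(σ₁,Δ))` and `V(lk(σ₂,Δ))` are disjoint with union `V(Δ)` if and
only if `Δ = lk(σ₁,Δ) * lk(σ₂,Δ)`. -/
theorem join_of_face_links (d : ℕ) (Δ : Finset (Finset V)) (hF : IsFlag Δ)
    (hN : IsNormalPseudomanifold Δ d) (σ₁ σ₂ : Finset V)
    (h1 : σ₁.Nonempty) (h2 : σ₂.Nonempty) (hdisj : Disjoint σ₁ σ₂)
    (hσ : IsFacet Δ (σ₁ ∪ σ₂)) :
    (Disjoint (verts (link Δ σ₁)) (verts (link Δ σ₂)) ∧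
        verts (link Δ σ₁) ∪ verts (link Δ σ₂) = verts Δ) ↔
      Δ = join (link Δ σ₁) (link Δ σ₂) := by
  obtain ⟨hpm, -, hl⟩ := hN
  have hC := hpm.1
  have hσ₁ : σ₁ ∈ Δ := hC.mem_of_subset hσ.1 subset_union_left
  have hσ₂ : σ₂ ∈ Δ := hC.mem_of_subset hσ.1 subset_union_right
  have hd : d = σ₂.card + σ₁.card := by
    rw [← hpm.2.1 _ hσ, card_union_of_disjoint hdisj, add_comm]
  have hlink {σ σ' : Finset V} (hσ : σ ∈ Δ) (hσ' : σ'.Nonempty) (hd : d = σ'.card + σ.card) :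
      IsPseudomanifold (link Δ σ) σ'.card := by
    simpa [hd] using isPseudomanifold_link hpm hσ (by have := hσ'.card_pos; omega)
  have hdV := hF.disjoint_verts_link hC hσ
  refine ⟨fun ⟨_, hV⟩ => ?_, fun hJ => ⟨hdV, ?_⟩⟩
  · refine eq_join_of_subset_join (hd ▸ hpm) (fun _ => (hlink hσ₁ h2 hd).card_le)
      (hlink hσ₂ h1 (by omega)) (fun B B' hB hB' => ?_) link_subset link_subset hdV
      (hF.subset_join_link hC hσ₁ hσ₂ hV)
    refine (hlink hσ₂ h1 (by omega)).reflTransGen_facetStep ?_ hB hB'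
    simpa [hd] using LinksConnOn.link (σ := σ₂) hC hl
  · rw [← verts_join (isComplex_link hC hσ₁).1 (isComplex_link hC hσ₂).1]
    exact congrArg verts hJ.symm
end

section
/- Let d ≥ 3, let Δ be a flag (d−1)-dimensional pseudomanifold, and let σ be a facet of Δ. Then Σ_{τ⊆σ, |τ|=d−2} f₀(lk(τ,Δ)) = |∪_{τ⊆σ, |τ|=d−2} V(lk(τ,Δ))| + 2d(d−2), where the sum and union range over all subsets τ of σ of cardinality d−2. -/
open Finset

variable {V : Type*} [DecidableEq V]

/-! Let `N(v)` be the set of neighbours of the vertex `v` inside `σ`. By flagness, `v` lies in the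
link of `τ ⊆ σ` exactly when `τ ⊆ N(v)`, so the left-hand side counts every vertex `v`
`C(|N(v)|, d-2)` times. As `σ` is a facet, `|N(v)| ≤ d - 1`; hence every vertex of the union is
counted once, except those with `|N(v)| = d - 1`, which are counted `d - 1` times. The vertices
with `N(v)` equal to a given ridge `ρ` of `σ` correspond to the facets `ρ ∪ {v}` through `ρ`, so
there are two of them for each of the `d` ridges, and they contribute the extra `2d(d-2)`. -/

theorem verts_link_subset (Δ : Finset (Finset V)) (τ : Finset V) :
    verts (link Δ τ) ⊆ verts Δ :=
  sup_mono (filter_subset _ _)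

namespace IsComplex

variable {Δ : Finset (Finset V)}

theorem singleton_mem_iff (hΔ : IsComplex Δ) {v : V} : {v} ∈ Δ ↔ v ∈ verts Δ := by
  refine ⟨fun h => mem_sup.2 ⟨{v}, h, mem_singleton_self v⟩, fun h => ?_⟩
  obtain ⟨ρ, hρ, hv⟩ := mem_sup.1 h
  exact hΔ.2 ρ hρ {v} (singleton_subset_iff.2 hv)

theorem fNum_zero (hΔ : IsComplex Δ) : fNum Δ 0 = #(verts Δ) := by
  have : Δ.filter (fun ρ => #ρ = 0 + 1) = (verts Δ).map ⟨singleton, singleton_injective⟩ := by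
    ext ρ
    simp only [mem_filter, mem_map, zero_add, card_eq_one, Function.Embedding.coeFn_mk]
    constructor
    · rintro ⟨hρ, v, rfl⟩
      exact ⟨v, hΔ.singleton_mem_iff.1 hρ, rfl⟩
    · rintro ⟨v, hv, rfl⟩
      exact ⟨hΔ.singleton_mem_iff.2 hv, v, rfl⟩
  rw [fNum, this, card_map]

protected theorem link (hΔ : IsComplex Δ) {τ : Finset V} (hτ : τ ∈ Δ) :
    IsComplex (link Δ τ) := by
  refine ⟨mem_filter.2 ⟨hΔ.1, empty_inter τ, by rwa [empty_union]⟩, fun ρ hρ ρ' hρ' => ?_⟩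
  obtain ⟨hρΔ, hdisj, hunion⟩ := mem_filter.1 hρ
  exact mem_filter.2 ⟨hΔ.2 ρ hρΔ ρ' hρ',
    subset_empty.1 (hdisj ▸ inter_subset_inter hρ' subset_rfl),
    hΔ.2 _ hunion _ (union_subset_union hρ' subset_rfl)⟩

theorem mem_verts_link_s3 (hΔ : IsComplex Δ) {τ : Finset V} (hτ : τ ∈ Δ) {v : V} :
    v ∈ verts (link Δ τ) ↔ v ∉ τ ∧ insert v τ ∈ Δ := by
  rw [← (hΔ.link hτ).singleton_mem_iff, link, mem_filter, singleton_union,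
    ← disjoint_iff_inter_eq_empty, disjoint_singleton_left]
  exact ⟨fun h => h.2, fun h => ⟨hΔ.2 _ h.2 _ (singleton_subset_iff.2 (mem_insert_self v τ)), h⟩⟩

end IsComplex

theorem IsFlag.insert_mem {Δ : Finset (Finset V)} (hF : IsFlag Δ) (hΔ : IsComplex Δ)
    {τ : Finset V} (hτ : τ ∈ Δ) {v : V} (hv : {v} ∈ Δ) (h : ∀ u ∈ τ, {v, u} ∈ Δ) :
    insert v τ ∈ Δ := by
  refine hF _ fun a ha b hb => ?_
  rcases mem_insert.1 ha with rfl | haτ <;> rcases mem_insert.1 hb with rfl | hbτ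
  · simpa using hv
  · exact h b hbτ
  · rw [pair_comm]
    exact h a haτ
  · exact hΔ.2 τ hτ _ (insert_subset haτ (singleton_subset_iff.2 hbτ))

instance (Δ : Finset (Finset V)) : DecidableRel (skGraph Δ).Adj :=
  fun u v => inferInstanceAs (Decidable (u ≠ v ∧ ({u, v} : Finset V) ∈ Δ))

def neighborsIn (Δ : Finset (Finset V)) (σ : Finset V) (v : V) : Finset V :=
  σ.filter ((skGraph Δ).Adj v)

section Neighbors

variable {Δ : Finset (Finset V)} {σ τ : Finset V} {u v : V}

theorem mem_neighborsIn :
    u ∈ neighborsIn Δ σ v ↔ u ∈ σ ∧ v ≠ u ∧ ({v, u} : Finset V) ∈ Δ :=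
  mem_filter

theorem neighborsIn_subset : neighborsIn Δ σ v ⊆ σ :=
  filter_subset _ _

theorem IsFlag.mem_verts_link_iff (hF : IsFlag Δ) (hΔ : IsComplex Δ) (hσ : σ ∈ Δ) (hτ : τ ⊆ σ)
    (hv : v ∈ verts Δ) : v ∈ verts (link Δ τ) ↔ τ ⊆ neighborsIn Δ σ v := by
  have hτΔ := hΔ.2 σ hσ τ hτ
  rw [hΔ.mem_verts_link_s3 hτΔ]
  constructor
  · rintro ⟨hvτ, hins⟩ u hu
    exact mem_neighborsIn.2 ⟨hτ hu, fun h => hvτ (h ▸ hu),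
      hΔ.2 _ hins _ (insert_subset_insert v (singleton_subset_iff.2 hu))⟩
  · intro h
    exact ⟨fun hvτ => (mem_neighborsIn.1 (h hvτ)).2.1 rfl,
      hF.insert_mem hΔ hτΔ (hΔ.singleton_mem_iff.2 hv) fun u hu => (mem_neighborsIn.1 (h hu)).2.2⟩

theorem IsFlag.filter_mem_verts_link (hF : IsFlag Δ) (hΔ : IsComplex Δ) (hσ : σ ∈ Δ)
    (hv : v ∈ verts Δ) (k : ℕ) :
    (σ.powersetCard k).filter (fun τ => v ∈ verts (link Δ τ)) =
      (neighborsIn Δ σ v).powersetCard k := by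
  ext τ
  simp only [mem_filter, mem_powersetCard]
  constructor
  · rintro ⟨⟨hτ, hk⟩, hvτ⟩
    exact ⟨(hF.mem_verts_link_iff hΔ hσ hτ hv).1 hvτ, hk⟩
  · rintro ⟨hτ, hk⟩
    have hτσ := hτ.trans neighborsIn_subset
    exact ⟨⟨hτσ, hk⟩, (hF.mem_verts_link_iff hΔ hσ hτσ hv).2 hτ⟩

theorem IsFlag.biUnion_verts_link (hF : IsFlag Δ) (hΔ : IsComplex Δ) (hσ : σ ∈ Δ) (k : ℕ) :
    (σ.powersetCard k).biUnion (fun τ => verts (link Δ τ)) =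
      (verts Δ).filter (fun v => k ≤ #(neighborsIn Δ σ v)) := by
  ext v
  rw [mem_filter]
  by_cases hv : v ∈ verts Δ
  · rw [mem_biUnion, ← filter_nonempty_iff, hF.filter_mem_verts_link hΔ hσ hv,
      powersetCard_nonempty]
    exact (and_iff_right hv).symm
  · refine iff_of_false (fun h => hv ?_) (fun h => hv h.1)
    obtain ⟨τ, -, hvτ⟩ := mem_biUnion.1 h
    exact verts_link_subset Δ τ hvτ

theorem IsFlag.sum_card_verts_link (hF : IsFlag Δ) (hΔ : IsComplex Δ) (hσ : σ ∈ Δ) (k : ℕ) :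
    ∑ τ ∈ σ.powersetCard k, #(verts (link Δ τ)) =
      ∑ v ∈ verts Δ, (#(neighborsIn Δ σ v)).choose k := by
  let r : Finset V → V → Prop := fun τ v => v ∈ verts (link Δ τ)
  calc ∑ τ ∈ σ.powersetCard k, #(verts (link Δ τ))
      = ∑ τ ∈ σ.powersetCard k, #((verts Δ).bipartiteAbove r τ) := by
        refine sum_congr rfl fun τ _ => ?_
        rw [bipartiteAbove, filter_mem_eq_inter, inter_eq_right.2 (verts_link_subset Δ τ)]
    _ = ∑ v ∈ verts Δ, #((σ.powersetCard k).bipartiteBelow r v) :=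
        sum_card_bipartiteAbove_eq_sum_card_bipartiteBelow r
    _ = ∑ v ∈ verts Δ, (#(neighborsIn Δ σ v)).choose k := by
        refine sum_congr rfl fun v hv => ?_
        rw [bipartiteBelow, hF.filter_mem_verts_link hΔ hσ hv, card_powersetCard]

theorem IsFlag.card_neighborsIn_lt (hF : IsFlag Δ) (hΔ : IsComplex Δ) (hσ : IsFacet Δ σ)
    (hv : v ∈ verts Δ) : #(neighborsIn Δ σ v) < #σ := by
  refine card_lt_card (ssubset_of_subset_of_ne neighborsIn_subset fun h => ?_)
  have hlink := (hF.mem_verts_link_iff hΔ hσ.1 subset_rfl hv).2 h.symm.subset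
  obtain ⟨hvσ, hins⟩ := (hΔ.mem_verts_link_s3 hσ.1).1 hlink
  exact hvσ (hσ.2 _ hins (subset_insert v σ) ▸ mem_insert_self v σ)

theorem IsFlag.card_filter_neighborsIn_eq (hF : IsFlag Δ) (hΔ : IsComplex Δ) (hσ : IsFacet Δ σ)
    (hτ : τ ⊆ σ) (hτσ : #τ + 1 = #σ) :
    #((verts Δ).filter (fun v => neighborsIn Δ σ v = τ)) =
      #(Δ.filter (fun ρ => #ρ = #σ ∧ τ ⊆ ρ)) := by
  have insert_mem_iff {v} (hv : v ∈ verts Δ) :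
      v ∉ τ ∧ insert v τ ∈ Δ ↔ τ ⊆ neighborsIn Δ σ v := by
    rw [← hΔ.mem_verts_link_s3 (hΔ.2 σ hσ.1 τ hτ), hF.mem_verts_link_iff hΔ hσ.1 hτ hv]
  refine card_bij (fun v _ => insert v τ) (fun v hv => ?_) (fun v hv w _ h => ?_) (fun ρ hρ => ?_)
  · obtain ⟨hv, hN⟩ := mem_filter.1 hv
    obtain ⟨hvτ, hins⟩ := (insert_mem_iff hv).2 hN.ge
    exact mem_filter.2 ⟨hins, by rw [card_insert_of_notMem hvτ, hτσ], subset_insert v τ⟩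
  · obtain ⟨hv, hN⟩ := mem_filter.1 hv
    exact (insert_inj ((insert_mem_iff hv).2 hN.ge).1).1 h
  · obtain ⟨hρ, hρσ, hτρ⟩ := mem_filter.1 hρ
    obtain ⟨v, hvτ, rfl⟩ := exists_eq_insert_iff.2 ⟨hτρ, hρσ ▸ hτσ⟩
    have hv : v ∈ verts Δ :=
      hΔ.singleton_mem_iff.1 (hΔ.2 _ hρ _ (singleton_subset_iff.2 (mem_insert_self v τ)))
    have hN := (insert_mem_iff hv).1 ⟨hvτ, hρ⟩
    have hN_eq := eq_of_subset_of_card_le hN (by have := hF.card_neighborsIn_lt hΔ hσ hv; omega)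
    exact ⟨v, mem_filter.2 ⟨hv, hN_eq.symm⟩, rfl⟩

theorem IsPseudomanifold.card_filter_card_neighborsIn {m : ℕ} (hP : IsPseudomanifold Δ (m + 1))
    (hF : IsFlag Δ) (hσ : IsFacet Δ σ) :
    #((verts Δ).filter (fun v => #(neighborsIn Δ σ v) = m)) = 2 * (m + 1) := by
  obtain ⟨hΔ, hpure, hridge⟩ := hP
  have hσm : #σ = m + 1 := hpure σ hσ
  have hmaps : ((verts Δ).filter (fun v => #(neighborsIn Δ σ v) = m) : Set V).MapsTo
      (neighborsIn Δ σ) (σ.powersetCard m) := fun v hv =>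
    mem_powersetCard.2 ⟨neighborsIn_subset, (mem_filter.1 hv).2⟩
  rw [card_eq_sum_card_fiberwise hmaps, sum_const_nat (m := 2), card_powersetCard, hσm,
    Nat.choose_succ_self_right, mul_comm]
  intro τ hτ
  obtain ⟨hτσ, hτm⟩ := mem_powersetCard.1 hτ
  have hfiber : (verts Δ).filter (fun v => #(neighborsIn Δ σ v) = m ∧ neighborsIn Δ σ v = τ) =
      (verts Δ).filter (fun v => neighborsIn Δ σ v = τ) :=
    filter_congr fun v _ => and_iff_right_of_imp fun h => h ▸ hτm
  rw [filter_filter, hfiber, hF.card_filter_neighborsIn_eq hΔ hσ hτσ (by omega), hσm]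
  exact hridge τ (hΔ.2 σ hσ.1 τ hτσ) (by omega)

end Neighbors

theorem choose_eq_of_le_succ {n k : ℕ} (h : n ≤ k + 1) :
    n.choose k = (if k ≤ n then 1 else 0) + if n = k + 1 then k else 0 := by
  obtain hn | rfl | rfl : n < k ∨ n = k ∨ n = k + 1 := by omega
  · simp [Nat.choose_eq_zero_of_lt hn, hn.not_ge, show n ≠ k + 1 by omega]
  · simp
  · simp [Nat.choose_succ_self_right, add_comm]

theorem IsPseudomanifold.sum_card_verts_link {Δ : Finset (Finset V)} {σ : Finset V} {k : ℕ}
    (hP : IsPseudomanifold Δ (k + 2)) (hF : IsFlag Δ) (hσ : IsFacet Δ σ) :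
    ∑ τ ∈ σ.powersetCard k, #(verts (link Δ τ)) =
      #((σ.powersetCard k).biUnion fun τ => verts (link Δ τ)) + 2 * (k + 2) * k := by
  have hΔ := hP.1
  have hσk : #σ = k + 2 := hP.2.1 σ hσ
  rw [hF.sum_card_verts_link hΔ hσ.1, hF.biUnion_verts_link hΔ hσ.1,
    ← hP.card_filter_card_neighborsIn hF hσ]
  calc ∑ v ∈ verts Δ, (#(neighborsIn Δ σ v)).choose k
      = ∑ v ∈ verts Δ, ((if k ≤ #(neighborsIn Δ σ v) then 1 else 0) +
          if #(neighborsIn Δ σ v) = k + 1 then k else 0) := by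
        refine sum_congr rfl fun v hv => choose_eq_of_le_succ ?_
        have := hF.card_neighborsIn_lt hΔ hσ hv
        omega
    _ = _ := by
        rw [sum_add_distrib, sum_boole, Nat.cast_id, ← sum_filter, sum_const, smul_eq_mul,
          mul_comm]

theorem sum_of_codim_two_face_links_general (d : ℕ) (Δ : Finset (Finset V))
    (hF : IsFlag Δ) (hP : IsPseudomanifold Δ d) (σ : Finset V) (hσ : IsFacet Δ σ) :
    ∑ τ ∈ σ.powersetCard (d - 2), fNum (link Δ τ) 0 =
      ((σ.powersetCard (d - 2)).biUnion fun τ => verts (link Δ τ)).card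
        + 2 * d * (d - 2) := by
  have hΔ := hP.1
  rw [sum_congr rfl fun τ hτ =>
    (hΔ.link (hΔ.2 σ hσ.1 τ (mem_powersetCard.1 hτ).1)).fNum_zero]
  obtain hd | ⟨k, rfl⟩ : d < 2 ∨ ∃ k, d = k + 2 :=
    (Nat.lt_or_ge d 2).imp_right fun hd => ⟨d - 2, by omega⟩
  · simp [Nat.sub_eq_zero_of_le hd.le]
  · simpa using hP.sum_card_verts_link hF hσ

/-- Let `d ≥ 3`, let `Δ` be a flag `(d-1)`-pseudomanifold and
`σ` a facet.  Then `Σ_{τ ⊆ σ, |τ| = d-2} f₀(lk(τ,Δ))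
= |∪_{τ ⊆ σ, |τ| = d-2} V(lk(τ,Δ))| + 2d(d-2)`. -/
theorem sum_of_codim_two_face_links (d : ℕ) (hd : 3 ≤ d) (Δ : Finset (Finset V))
    (hF : IsFlag Δ) (hP : IsPseudomanifold Δ d) (σ : Finset V) (hσ : IsFacet Δ σ) :
    ∑ τ ∈ σ.powersetCard (d - 2), fNum (link Δ τ) 0 =
      ((σ.powersetCard (d - 2)).biUnion fun τ => verts (link Δ τ)).card
        + 2 * d * (d - 2) :=
  sum_of_codim_two_face_links_general d Δ hF hP σ hσ
end
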